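/- arXiv:1304.6371 — 2 statements merged into one kernel-verified Lean document; each statement's English description precedes it below -/
import Mathlib

section
/- Let (R, ⊕, ·) be a semihyperring. Then R is fully idempotent if and only if for every pair of fuzzy hyperideals λ and μ of R, min(λ, μ) = λμ (pointwise minimum equals the product). -/
/-- The unit interval `[0,1]` is a complete lattice. -/
noncomputable instance : Fact ((0:ℝ) ≤ 1) := ⟨zero_le_one⟩

/-- A semihyperring `(R, ⊕, ·)`: a hyperoperation `hadd` (with nonempty values),
a binary multiplication `mul`, and an element `zero`, satisfying commutativity and
(extended) associativity of `⊕`, associativity of `·`, two-sided distributivity of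
`·` over `⊕` (as sets), and `0 ⊕ x = {x}`, `0·x = 0 = x·0`. -/
class Semihyperring (R : Type*) where
  hadd : R → R → Set R
  mul : R → R → R
  zero : R
  hadd_nonempty : ∀ x y : R, (hadd x y).Nonempty
  hadd_comm : ∀ x y : R, hadd x y = hadd y x
  hadd_assoc : ∀ x y z : R, (⋃ w ∈ hadd y z, hadd x w) = ⋃ w ∈ hadd x y, hadd w z
  mul_assoc : ∀ x y z : R, mul (mul x y) z = mul x (mul y z)
  left_distrib : ∀ x y z : R, (fun w => mul x w) '' hadd y z = hadd (mul x y) (mul x z)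
  right_distrib : ∀ x y z : R, (fun w => mul w z) '' hadd x y = hadd (mul x z) (mul y z)
  zero_hadd : ∀ x : R, hadd zero x = {x}
  hadd_zero : ∀ x : R, hadd x zero = {x}
  zero_mul : ∀ x : R, mul zero x = zero
  mul_zero : ∀ x : R, mul x zero = zero

namespace Semihyperring

variable {R : Type*} [Semihyperring R]

/-- The hyperoperation `⊕` extended to subsets: `A ⊕ B = ⋃ {a ⊕ b : a ∈ A, b ∈ B}`. -/
def haddSet (A B : Set R) : Set R := ⋃ a ∈ A, ⋃ b ∈ B, hadd a b

/-- The hypersum `x₁ ⊕ x₂ ⊕ ⋯ ⊕ xₚ` of a list of elements (the empty hypersum is `{0}`,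
which is neutral since `0 ⊕ x = {x}`). -/
def hsumList : List R → Set R
  | [] => {zero}
  | x :: xs => haddSet {x} (hsumList xs)

/-- A (two-sided) hyperideal: a nonempty subset closed under `⊕` and under
multiplication by arbitrary elements of `R` on both sides. -/
def IsHyperideal (I : Set R) : Prop :=
  I.Nonempty ∧ (∀ x ∈ I, ∀ y ∈ I, hadd x y ⊆ I) ∧
    (∀ r : R, ∀ x ∈ I, mul r x ∈ I ∧ mul x r ∈ I)

/-- A right hyperideal. -/
def IsRightHyperideal (I : Set R) : Prop :=
  I.Nonempty ∧ (∀ x ∈ I, ∀ y ∈ I, hadd x y ⊆ I) ∧ (∀ x ∈ I, ∀ r : R, mul x r ∈ I)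

/-- A left hyperideal. -/
def IsLeftHyperideal (I : Set R) : Prop :=
  I.Nonempty ∧ (∀ x ∈ I, ∀ y ∈ I, hadd x y ⊆ I) ∧ (∀ x ∈ I, ∀ r : R, mul r x ∈ I)

/-- The product of two subsets:
`AB = {x : x ∈ a₁b₁ ⊕ ⋯ ⊕ aₚbₚ for some p ≥ 1, aᵢ ∈ A, bᵢ ∈ B}`. -/
def setProd (A B : Set R) : Set R :=
  {x | ∃ l : List (R × R), l ≠ [] ∧ (∀ p ∈ l, p.1 ∈ A ∧ p.2 ∈ B) ∧
    x ∈ hsumList (l.map fun p => mul p.1 p.2)}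

/-- `R` is fully idempotent if every hyperideal `I` satisfies `I² = I`. -/
def FullyIdempotent (R : Type*) [Semihyperring R] : Prop :=
  ∀ I : Set R, IsHyperideal I → setProd I I = I

/-- `R` is (von Neumann) regular if every `x` satisfies `x = x·a·x` for some `a`. -/
def Regular (R : Type*) [Semihyperring R] : Prop :=
  ∀ x : R, ∃ a : R, x = mul (mul x a) x

/-- A fuzzy hyperideal of `R`: a function `μ : R → [0,1]` with
`inf {μ z : z ∈ x ⊕ y} ≥ min (μ x) (μ y)` and `μ (x·y) ≥ max (μ x) (μ y)`. -/
def IsFuzzyHyperideal (μ : R → unitInterval) : Prop :=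
  (∀ x y : R, μ x ⊓ μ y ≤ ⨅ z ∈ hadd x y, μ z) ∧
  (∀ x y : R, μ x ⊔ μ y ≤ μ (mul x y))

/-- A fuzzy right hyperideal: `inf {λ z : z ∈ x ⊕ y} ≥ min (λ x) (λ y)` and `λ (x·y) ≥ λ x`. -/
def IsFuzzyRightHyperideal (μ : R → unitInterval) : Prop :=
  (∀ x y : R, μ x ⊓ μ y ≤ ⨅ z ∈ hadd x y, μ z) ∧
  (∀ x y : R, μ x ≤ μ (mul x y))

/-- A fuzzy left hyperideal: `inf {λ z : z ∈ x ⊕ y} ≥ min (λ x) (λ y)` and `λ (x·y) ≥ λ y`. -/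
def IsFuzzyLeftHyperideal (μ : R → unitInterval) : Prop :=
  (∀ x y : R, μ x ⊓ μ y ≤ ⨅ z ∈ hadd x y, μ z) ∧
  (∀ x y : R, μ y ≤ μ (mul x y))

/-- The product `λμ` of fuzzy subsets:
`(λμ)(x) = ⋁ { ⋀_{1≤i≤p} (λ yᵢ ⊓ μ zᵢ) : p ≥ 1, x ∈ y₁z₁ ⊕ ⋯ ⊕ yₚzₚ }`. -/
noncomputable def fprod (lam mu : R → unitInterval) (x : R) : unitInterval :=
  sSup {t | ∃ l : List (R × R), l ≠ [] ∧
    x ∈ hsumList (l.map fun p => mul p.1 p.2) ∧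
    t = ⨅ p ∈ l, lam p.1 ⊓ mu p.2}

/-- The sum `λ ⊕ μ` of fuzzy subsets:
`(λ ⊕ μ)(x) = ⋁ { λ y ⊓ μ z : x ∈ y ⊕ z }`. -/
noncomputable def fsum (lam mu : R → unitInterval) (x : R) : unitInterval :=
  sSup {t | ∃ y z : R, x ∈ hadd y z ∧ t = lam y ⊓ mu z}

/-- The composition `λ ∘ μ` of fuzzy subsets:
`(λ ∘ μ)(x) = ⋁ { λ y ⊓ μ z : x = y·z }` (with `⋁ ∅ = 0`). -/
noncomputable def fcomp (lam mu : R → unitInterval) (x : R) : unitInterval :=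
  sSup {t | ∃ y z : R, x = mul y z ∧ t = lam y ⊓ mu z}

/-- A fuzzy prime hyperideal: a fuzzy hyperideal `η` such that for all fuzzy hyperideals
`λ, μ`, `λμ ≤ η` implies `λ ≤ η` or `μ ≤ η`. -/
def IsFuzzyPrimeHyperideal (η : R → unitInterval) : Prop :=
  IsFuzzyHyperideal η ∧ ∀ lam mu : R → unitInterval, IsFuzzyHyperideal lam →
    IsFuzzyHyperideal mu → fprod lam mu ≤ η → lam ≤ η ∨ mu ≤ η

/-- A fuzzy irreducible hyperideal: a fuzzy hyperideal `η` such that for all fuzzy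
hyperideals `λ, μ`, `min (λ, μ) = η` (pointwise) implies `λ = η` or `μ = η`. -/
def IsFuzzyIrreducibleHyperideal (η : R → unitInterval) : Prop :=
  IsFuzzyHyperideal η ∧ ∀ lam mu : R → unitInterval, IsFuzzyHyperideal lam →
    IsFuzzyHyperideal mu → lam ⊓ mu = η → lam = η ∨ mu = η

/-- `FP R`: the set of proper fuzzy prime hyperideals of `R`
(`η` is proper if it is not the constant function `1`). -/
def FP (R : Type*) [Semihyperring R] : Set (R → unitInterval) :=
  {η | IsFuzzyPrimeHyperideal η ∧ η ≠ fun _ => 1}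

/-- `O λ = {μ ∈ FP R : λ ≰ μ}`. -/
def O (lam : R → unitInterval) : Set (R → unitInterval) :=
  {mu ∈ FP R | ¬ lam ≤ mu}

/-- The sum `Σᵢ ηᵢ` of an arbitrary family of fuzzy subsets:
`(Σᵢ ηᵢ)(x) = ⋁ { ⋀_{1≤k≤p} η_{i_k} (x_k) : p ≥ 1, x ∈ x₁ ⊕ ⋯ ⊕ xₚ }`. -/
noncomputable def famSum {ι : Type*} (η : ι → R → unitInterval) (x : R) : unitInterval :=
  sSup {t | ∃ l : List (ι × R), l ≠ [] ∧ x ∈ hsumList (l.map Prod.snd) ∧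
    t = ⨅ p ∈ l, η p.1 p.2}

end Semihyperring

namespace Semihyperring

variable {R : Type*} [Semihyperring R]

lemma mem_hsumList_cons {x z : R} {xs : List R} :
    z ∈ hsumList (x :: xs) ↔ ∃ w ∈ hsumList xs, z ∈ hadd x w := by
  simp [hsumList, haddSet]

lemma hsumList_subset {I : Set R} (hI : ∀ x ∈ I, ∀ y ∈ I, hadd x y ⊆ I) :
    ∀ {l : List R}, l ≠ [] → (∀ a ∈ l, a ∈ I) → hsumList l ⊆ I
  | [], hl, _ => absurd rfl hl
  | [x], _, hmem => by simpa [hsumList, haddSet, hadd_zero] using hmem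
  | x :: y :: ys, _, hmem => by
    intro z hz
    obtain ⟨w, hw, hzw⟩ := mem_hsumList_cons.mp hz
    have hwI : w ∈ I := hsumList_subset hI (List.cons_ne_nil y ys)
      (fun a ha => hmem a (List.mem_cons_of_mem x ha)) hw
    exact hI x (hmem x List.mem_cons_self) w hwI hzw

lemma hadd_subset_levelSet {μ : R → unitInterval}
    (hμ : ∀ x y : R, μ x ⊓ μ y ≤ ⨅ z ∈ hadd x y, μ z) (t : unitInterval) :
    ∀ x ∈ {y | t ≤ μ y}, ∀ y ∈ {y | t ≤ μ y}, hadd x y ⊆ {y | t ≤ μ y} :=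
  fun x hx y hy z hz => (le_inf hx hy).trans ((hμ x y).trans (iInf₂_le z hz))

lemma IsHyperideal.isLeftHyperideal {I : Set R} (hI : IsHyperideal I) : IsLeftHyperideal I :=
  ⟨hI.1, hI.2.1, fun x hx r => (hI.2.2 r x hx).1⟩

lemma IsLeftHyperideal.setProd_subset {I : Set R} (hI : IsLeftHyperideal I) (A : Set R) :
    setProd A I ⊆ I := by
  rintro x ⟨l, hl, hmem, hx⟩
  refine hsumList_subset hI.2.1 (by simpa using hl) ?_ hx
  simp only [List.mem_map]
  rintro _ ⟨p, hp, rfl⟩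
  exact hI.2.2 p.2 (hmem p hp).2 p.1

lemma IsFuzzyHyperideal.isFuzzyRightHyperideal {μ : R → unitInterval}
    (hμ : IsFuzzyHyperideal μ) : IsFuzzyRightHyperideal μ :=
  ⟨hμ.1, fun x y => le_sup_left.trans (hμ.2 x y)⟩

lemma IsFuzzyHyperideal.isFuzzyLeftHyperideal {μ : R → unitInterval}
    (hμ : IsFuzzyHyperideal μ) : IsFuzzyLeftHyperideal μ :=
  ⟨hμ.1, fun x y => le_sup_right.trans (hμ.2 x y)⟩

lemma IsFuzzyHyperideal.inf {lam mu : R → unitInterval} (hlam : IsFuzzyHyperideal lam)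
    (hmu : IsFuzzyHyperideal mu) : IsFuzzyHyperideal (lam ⊓ mu) := by
  refine ⟨fun x y => le_iInf₂ fun z hz => ?_, fun x y => ?_⟩
  · exact le_inf
      ((inf_le_inf inf_le_left inf_le_left).trans ((hlam.1 x y).trans (iInf₂_le z hz)))
      ((inf_le_inf inf_le_right inf_le_right).trans ((hmu.1 x y).trans (iInf₂_le z hz)))
  · exact sup_le (inf_le_inf (le_sup_left.trans (hlam.2 x y)) (le_sup_left.trans (hmu.2 x y)))
      (inf_le_inf (le_sup_right.trans (hlam.2 x y)) (le_sup_right.trans (hmu.2 x y)))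

lemma IsFuzzyHyperideal.isHyperideal_levelSet {μ : R → unitInterval}
    (hμ : IsFuzzyHyperideal μ) (x : R) : IsHyperideal {y | μ x ≤ μ y} :=
  ⟨⟨x, le_refl (μ x)⟩, hadd_subset_levelSet hμ.1 (μ x),
    fun r y hy => ⟨hy.trans (le_sup_right.trans (hμ.2 r y)),
      hy.trans (le_sup_left.trans (hμ.2 y r))⟩⟩

-- The level set of `λ` at `⋀ᵢ (λ yᵢ ⊓ μ zᵢ)` contains every `yᵢzᵢ`, hence their hypersum.
lemma fprod_le_left {lam : R → unitInterval} (hlam : IsFuzzyRightHyperideal lam)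
    (mu : R → unitInterval) : fprod lam mu ≤ lam := fun x => by
  refine sSup_le ?_
  rintro _ ⟨l, hl, hx, rfl⟩
  refine hsumList_subset (hadd_subset_levelSet hlam.1 _) (by simpa using hl) ?_ hx
  simp only [List.mem_map, Set.mem_ofPred_eq]
  rintro _ ⟨p, hp, rfl⟩
  exact (iInf₂_le p hp).trans (inf_le_left.trans (hlam.2 p.1 p.2))

lemma fprod_le_right (lam : R → unitInterval) {mu : R → unitInterval}
    (hmu : IsFuzzyLeftHyperideal mu) : fprod lam mu ≤ mu := fun x => by
  refine sSup_le ?_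
  rintro _ ⟨l, hl, hx, rfl⟩
  refine hsumList_subset (hadd_subset_levelSet hmu.1 _) (by simpa using hl) ?_ hx
  simp only [List.mem_map, Set.mem_ofPred_eq]
  rintro _ ⟨p, hp, rfl⟩
  exact (iInf₂_le p hp).trans (inf_le_right.trans (hmu.2 p.1 p.2))

lemma le_fprod_of_mem_setProd {lam mu : R → unitInterval} {A B : Set R} {t : unitInterval}
    (hA : ∀ a ∈ A, t ≤ lam a) (hB : ∀ b ∈ B, t ≤ mu b) {x : R} (hx : x ∈ setProd A B) :
    t ≤ fprod lam mu x := by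
  obtain ⟨l, hl, hmem, hxl⟩ := hx
  exact le_sSup_of_le ⟨l, hl, hxl, rfl⟩
    (le_iInf₂ fun p hp => le_inf (hA _ (hmem p hp).1) (hB _ (hmem p hp).2))

lemma IsHyperideal.isFuzzyHyperideal_indicator {I : Set R} (hI : IsHyperideal I) :
    IsFuzzyHyperideal (I.indicator 1) := by
  refine ⟨fun x y => ?_, fun x y => ?_⟩
  · by_cases hx : x ∈ I
    · by_cases hy : y ∈ I
      · exact le_iInf₂ fun z hz => by
          simp [hx, hy, Set.indicator_of_mem (hI.2.1 x hx y hy hz)]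
      · simp [hy]
    · simp [hx]
  · by_cases hxy : mul x y ∈ I
    · simp [Set.indicator_of_mem hxy, unitInterval.le_one']
    · have hx : x ∉ I := fun hx => hxy (hI.2.2 y x hx).2
      have hy : y ∉ I := fun hy => hxy (hI.2.2 x y hy).1
      simp [hx, hy]

lemma fprod_indicator_eq_zero {A B : Set R} {x : R} (hx : x ∉ setProd A B) :
    fprod (A.indicator 1) (B.indicator 1) x = 0 := by
  refine le_antisymm (sSup_le ?_) unitInterval.nonneg'
  rintro _ ⟨l, hl, hxl, rfl⟩
  have ⟨p, hp, hout⟩ : ∃ p ∈ l, ¬(p.1 ∈ A ∧ p.2 ∈ B) := by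
    by_contra! hall
    exact hx ⟨l, hl, hall, hxl⟩
  refine (iInf₂_le p hp).trans ?_
  by_cases hpA : p.1 ∈ A
  · simp [Set.indicator_of_notMem fun hpB => hout ⟨hpA, hpB⟩]
  · simp [Set.indicator_of_notMem hpA]

end Semihyperring

open Semihyperring in
/-- `R` is fully idempotent iff `min (λ, μ) = λμ` for every pair of fuzzy
hyperideals `λ, μ` of `R`. -/
theorem fullyIdempotent_iff_inf_eq_fprod (R : Type*) [Semihyperring R] :
    FullyIdempotent R ↔
      ∀ lam mu : R → unitInterval, IsFuzzyHyperideal lam → IsFuzzyHyperideal mu →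
        lam ⊓ mu = fprod lam mu := by
  constructor
  · intro hFI lam mu hlam hmu
    refine le_antisymm (fun x => ?_)
      (le_inf (fprod_le_left hlam.isFuzzyRightHyperideal mu)
        (fprod_le_right lam hmu.isFuzzyLeftHyperideal))
    -- `x` lies in the level set `I` of `λ ⊓ μ` at its own value, and `I = I²`.
    have hI := (hlam.inf hmu).isHyperideal_levelSet x
    exact le_fprod_of_mem_setProd (fun a ha => ha.trans inf_le_left)
      (fun b hb => hb.trans inf_le_right) ((hFI _ hI).superset (le_refl ((lam ⊓ mu) x)))
  · intro hinf I hI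
    refine (hI.isLeftHyperideal.setProd_subset I).antisymm fun x hx => ?_
    by_contra hx'
    have := congrFun (hinf _ _ hI.isFuzzyHyperideal_indicator hI.isFuzzyHyperideal_indicator) x
    simp [Set.indicator_of_mem hx, fprod_indicator_eq_zero hx'] at this
end

section
/- Let (R, ⊕, ·) be a fully idempotent semihyperring. Then for all fuzzy hyperideals λ, δ, η of R, the distributive law min(λ, δ) ⊕ η = min(λ ⊕ η, δ ⊕ η) holds (pointwise minimum and sum of fuzzy hyperideals). -/
/-!
Cut the fuzzy hyperideals at a level `t`: the level sets `λ_t = {u | t ≤ λ u}` are hyperideals,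
`(λ ⊓ δ)_t = λ_t ∩ δ_t`, and `t ≤ (λ ⊕ η) x` as soon as `x ∈ λ_t ⊕ η_t`. The hard inequality
thus reduces to the crisp law `(A ⊕ C) ∩ (B ⊕ C) ⊆ (A ∩ B) ⊕ C` for hyperideals. For that,
`I = (A ⊕ C) ∩ (B ⊕ C)` is a hyperideal, so `I = I²`, and every product `pq` with `p ∈ A ⊕ C`,
`q ∈ B ⊕ C` lies in the hyperideal `(A ∩ B) ⊕ C`, by distributivity.
-/

namespace Semihyperring

def level {R : Type*} (μ : R → unitInterval) (t : unitInterval) : Set R := {u | t ≤ μ u}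

lemma level_inf {R : Type*} (lam delta : R → unitInterval) (t : unitInterval) :
    level (lam ⊓ delta) t = level lam t ∩ level delta t :=
  Set.ext fun u => show t ≤ lam u ⊓ delta u ↔ _ from le_inf_iff

variable {R : Type*} [Semihyperring R]

@[simp]
lemma mem_haddSet {A B : Set R} {u : R} :
    u ∈ haddSet A B ↔ ∃ a ∈ A, ∃ b ∈ B, u ∈ hadd a b := by
  simp [haddSet]

lemma mem_haddSet_of_mem_right {A C : Set R} (hA : zero ∈ A) {c : R} (hc : c ∈ C) :
    c ∈ haddSet A C :=
  mem_haddSet.2 ⟨zero, hA, c, hc, by rw [zero_hadd]; rfl⟩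

lemma haddSet_hadd_hadd_subset (a₁ c₁ a₂ c₂ : R) :
    haddSet (hadd a₁ c₁) (hadd a₂ c₂) ⊆ haddSet (hadd a₁ a₂) (hadd c₁ c₂) := by
  intro u hu
  obtain ⟨w₁, hw₁, w₂, hw₂, hu⟩ := mem_haddSet.1 hu
  have hv : u ∈ ⋃ v ∈ hadd w₁ a₂, hadd v c₂ := by
    rw [← hadd_assoc]; exact Set.mem_biUnion hw₂ hu
  obtain ⟨v, hv, huv⟩ := Set.mem_iUnion₂.1 hv
  have hs : v ∈ ⋃ s ∈ hadd a₁ a₂, hadd s c₁ := by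
    rw [← hadd_assoc, hadd_comm a₂ c₁, hadd_assoc]; exact Set.mem_biUnion hw₁ hv
  obtain ⟨s, hs, hvs⟩ := Set.mem_iUnion₂.1 hs
  have hc : u ∈ ⋃ c ∈ hadd c₁ c₂, hadd s c := by
    rw [hadd_assoc]; exact Set.mem_biUnion hvs huv
  obtain ⟨c, hc, huc⟩ := Set.mem_iUnion₂.1 hc
  exact mem_haddSet.2 ⟨s, hs, c, hc, huc⟩

namespace IsHyperideal

variable {A B C D : Set R}

lemma zero_mem (hA : IsHyperideal A) : zero ∈ A := by
  obtain ⟨x, hx⟩ := hA.1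
  simpa only [zero_mul] using (hA.2.2 zero x hx).1

lemma inter (hA : IsHyperideal A) (hB : IsHyperideal B) : IsHyperideal (A ∩ B) :=
  ⟨⟨zero, hA.zero_mem, hB.zero_mem⟩,
    fun x hx y hy => Set.subset_inter (hA.2.1 x hx.1 y hy.1) (hB.2.1 x hx.2 y hy.2),
    fun r x hx => ⟨⟨(hA.2.2 r x hx.1).1, (hB.2.2 r x hx.2).1⟩,
      ⟨(hA.2.2 r x hx.1).2, (hB.2.2 r x hx.2).2⟩⟩⟩

lemma haddSet (hA : IsHyperideal A) (hC : IsHyperideal C) :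
    IsHyperideal (Semihyperring.haddSet A C) := by
  refine ⟨⟨_, mem_haddSet_of_mem_right hA.zero_mem hC.1.some_mem⟩, ?_, ?_⟩
  · intro w₁ hw₁ w₂ hw₂ u hu
    obtain ⟨a₁, ha₁, c₁, hc₁, hw₁⟩ := mem_haddSet.1 hw₁
    obtain ⟨a₂, ha₂, c₂, hc₂, hw₂⟩ := mem_haddSet.1 hw₂
    obtain ⟨s, hs, c, hc, hu⟩ := mem_haddSet.1 <|
      haddSet_hadd_hadd_subset a₁ c₁ a₂ c₂ (mem_haddSet.2 ⟨w₁, hw₁, w₂, hw₂, hu⟩)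
    exact mem_haddSet.2 ⟨s, hA.2.1 a₁ ha₁ a₂ ha₂ hs, c, hC.2.1 c₁ hc₁ c₂ hc₂ hc, hu⟩
  · intro r u hu
    obtain ⟨a, ha, c, hc, hu⟩ := mem_haddSet.1 hu
    constructor
    · refine mem_haddSet.2 ⟨_, (hA.2.2 r a ha).1, _, (hC.2.2 r c hc).1, ?_⟩
      rw [← left_distrib]; exact ⟨u, hu, rfl⟩
    · refine mem_haddSet.2 ⟨_, (hA.2.2 r a ha).2, _, (hC.2.2 r c hc).2, ?_⟩
      rw [← right_distrib]; exact ⟨u, hu, rfl⟩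

lemma hsumList_subset (hD : IsHyperideal D) :
    ∀ l : List R, (∀ x ∈ l, x ∈ D) → hsumList l ⊆ D
  | [], _ => Set.singleton_subset_iff.2 hD.zero_mem
  | x :: xs, hl => by
    intro u hu
    obtain ⟨a, rfl, b, hb, hu⟩ := mem_haddSet.1 hu
    exact hD.2.1 a (hl a List.mem_cons_self) b
      (hsumList_subset hD xs (fun y hy => hl y (List.mem_cons_of_mem _ hy)) hb) hu

lemma setProd_subset (hD : IsHyperideal D) (hmul : ∀ p ∈ A, ∀ q ∈ B, mul p q ∈ D) :
    setProd A B ⊆ D := by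
  rintro x ⟨l, -, hl, hx⟩
  refine hD.hsumList_subset _ ?_ hx
  simp only [List.mem_map]
  rintro _ ⟨p, hp, rfl⟩
  exact hmul p.1 (hl p hp).1 p.2 (hl p hp).2

lemma mul_mem_haddSet_inter (hA : IsHyperideal A) (hB : IsHyperideal B)
    (hC : IsHyperideal C) {p q : R} (hp : p ∈ Semihyperring.haddSet A C)
    (hq : q ∈ Semihyperring.haddSet B C) :
    mul p q ∈ Semihyperring.haddSet (A ∩ B) C := by
  have hD := (hA.inter hB).haddSet hC
  obtain ⟨a, ha, c, hc, hp⟩ := mem_haddSet.1 hp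
  obtain ⟨b, hb, c', hc', hq⟩ := mem_haddSet.1 hq
  have hpq : mul p q ∈ hadd (mul p b) (mul p c') := by
    rw [← left_distrib]; exact ⟨q, hq, rfl⟩
  have hpb : mul p b ∈ hadd (mul a b) (mul c b) := by
    rw [← right_distrib]; exact ⟨p, hp, rfl⟩
  refine hD.2.1 _ (mem_haddSet.2 ⟨_, ⟨(hA.2.2 b a ha).2, (hB.2.2 a b hb).1⟩, _,
    (hC.2.2 b c hc).2, hpb⟩) _ ?_ hpq
  exact mem_haddSet_of_mem_right (hA.inter hB).zero_mem (hC.2.2 p c' hc').1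

end IsHyperideal

lemma FullyIdempotent.inter_haddSet_subset (h : FullyIdempotent R) {A B C : Set R}
    (hA : IsHyperideal A) (hB : IsHyperideal B) (hC : IsHyperideal C) :
    haddSet A C ∩ haddSet B C ⊆ haddSet (A ∩ B) C := by
  have hI := (hA.haddSet hC).inter (hB.haddSet hC)
  rw [← h _ hI]
  exact ((hA.inter hB).haddSet hC).setProd_subset fun p hp q hq =>
    hA.mul_mem_haddSet_inter hB hC hp.1 hq.2

lemma IsFuzzyHyperideal.isHyperideal_level {μ : R → unitInterval} (hμ : IsFuzzyHyperideal μ)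
    {t : unitInterval} {w : R} (hw : t ≤ μ w) : IsHyperideal (level μ t) :=
  ⟨⟨w, hw⟩,
    fun a ha b hb _ hz => (le_inf ha hb).trans ((hμ.1 a b).trans (biInf_le _ hz)),
    fun r u hu => ⟨hu.trans (le_sup_right.trans (hμ.2 r u)),
      hu.trans (le_sup_left.trans (hμ.2 u r))⟩⟩

lemma fsum_mono_left {lam lam' : R → unitInterval} (hle : lam ≤ lam') (eta : R → unitInterval) :
    fsum lam eta ≤ fsum lam' eta := by
  intro x
  refine sSup_le ?_
  rintro _ ⟨y, z, hx, rfl⟩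
  exact (inf_le_inf_right _ (hle y)).trans (le_sSup ⟨y, z, hx, rfl⟩)

lemma le_fsum_of_mem_haddSet_level {lam eta : R → unitInterval} {t : unitInterval} {x : R}
    (hx : x ∈ haddSet (level lam t) (level eta t)) : t ≤ fsum lam eta x := by
  obtain ⟨y, hy, z, hz, hx⟩ := mem_haddSet.1 hx
  exact (le_inf hy hz).trans (le_sSup ⟨y, z, hx, rfl⟩)

lemma exists_lt_of_lt_fsum {lam eta : R → unitInterval} {c : unitInterval} {x : R}
    (hc : c < fsum lam eta x) : ∃ y z, x ∈ hadd y z ∧ c < lam y ⊓ eta z := by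
  obtain ⟨_, ⟨y, z, hx, rfl⟩, hct⟩ := lt_sSup_iff.1 hc
  exact ⟨y, z, hx, hct⟩

end Semihyperring

open Semihyperring in
/-- in a fully idempotent semihyperring, the distributive law
`min (λ, δ) ⊕ η = min (λ ⊕ η, δ ⊕ η)` holds for all fuzzy hyperideals `λ, δ, η`. -/
theorem fsum_inf_distrib {R : Type*} [Semihyperring R] (h : FullyIdempotent R)
    (lam delta eta : R → unitInterval) (hlam : IsFuzzyHyperideal lam)
    (hdelta : IsFuzzyHyperideal delta) (heta : IsFuzzyHyperideal eta) :
    fsum (lam ⊓ delta) eta = fsum lam eta ⊓ fsum delta eta := by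
  refine le_antisymm (le_inf (fsum_mono_left inf_le_left eta)
    (fsum_mono_left inf_le_right eta)) fun x => le_of_forall_lt fun c hc => ?_
  obtain ⟨y, z, hyz, hc₁⟩ := exists_lt_of_lt_fsum (lt_inf_iff.1 hc).1
  obtain ⟨y', z', hyz', hc₂⟩ := exists_lt_of_lt_fsum (lt_inf_iff.1 hc).2
  set t := lam y ⊓ eta z ⊓ (delta y' ⊓ eta z')
  have hy : y ∈ level lam t := (inf_le_left.trans inf_le_left : t ≤ lam y)
  have hz : z ∈ level eta t := (inf_le_left.trans inf_le_right : t ≤ eta z)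
  have hy' : y' ∈ level delta t := (inf_le_right.trans inf_le_left : t ≤ delta y')
  have hz' : z' ∈ level eta t := (inf_le_right.trans inf_le_right : t ≤ eta z')
  have hx : x ∈ haddSet (level (lam ⊓ delta) t) (level eta t) := by
    rw [level_inf]
    exact h.inter_haddSet_subset (hlam.isHyperideal_level hy)
      (hdelta.isHyperideal_level hy') (heta.isHyperideal_level hz)
      ⟨mem_haddSet.2 ⟨y, hy, z, hz, hyz⟩, mem_haddSet.2 ⟨y', hy', z', hz', hyz'⟩⟩
  exact (lt_inf_iff.2 ⟨hc₁, hc₂⟩).trans_le (le_fsum_of_mem_haddSet_level hx)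
end
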